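/- Let n ≥ 6 be an integer and let 0 ≤ r₁ ≤ r₂ ≤ ⋯ ≤ rₙ be integers such that (r₁,r₂,r₃,r₄) is one of: (0,0,0,i) with 0 ≤ i ≤ 2; (0,0,1,i) with 1 ≤ i ≤ 3; (0,1,1,i) with 1 ≤ i ≤ 2; or (0,1,2,i) with 2 ≤ i ≤ 3, and suppose r₄ + 2 ≤ rₙ. Then ∑_{r₄+2 ≤ t ≤ rₙ, l(t−1) odd} δ(t)·2^{d(t)−3/2} + ∑_{r₄+2 ≤ t ≤ rₙ, l(t−1) even} δ(t)·2^{d(t)−1} ≤ 2^{−1} + 2^{−2} + ⋯ + 2^{r₄ − rₙ + 1}. Furthermore, when (r₁,r₂,r₃,r₄) = (0,0,0,2) or (0,0,1,3), the left-hand side is at most 2^{−2} + 2^{−3} + ⋯ + 2^{r₄ − rₙ}. -/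

import Mathlib

/-!
Write `E(u) = ∑_{i : r i < u} (u - r i)` (`gapSum`). Then `d(t) = t - E(t-1)/2`, and
`l(t-1) ≡ E(t-1) (mod 2)`, so the `t`-th summand of the middle sum is at most
`2 ^ (t - 1 - ⌈E(t-1)/2⌉)`. Dropping all indices but the first four gives
`E(u) ≥ 4u - (r₁ + r₂ + r₃ + r₄)`, hence the `t`-th summand is at most `2 ^ (c - t)` whenever
`r₁ + r₂ + r₃ + r₄ ≤ 2c - 1`. The admissible quadruples allow `c = r₄ + 1`, and the two special
ones `c = r₄`; summing over `t` gives the two geometric bounds.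
-/

/-- `l(t) = #{i : r i < t and r i − t is odd}`. -/
noncomputable def lfun (n : ℕ) (r : Fin n → ℤ) (t : ℤ) : ℕ :=
  {i : Fin n | r i < t ∧ Odd (r i - t)}.ncard

/-- `d(t) = t + (1/2) ∑_{i : r i < t − 1} (r i − t + 1)`. -/
noncomputable def dfun (n : ℕ) (r : Fin n → ℤ) (t : ℤ) : ℝ :=
  (t : ℝ) + (1 / 2) * ∑ i : Fin n, if r i < t - 1 then ((r i : ℝ) - (t : ℝ) + 1) else 0

/-- `δ(t) = 0` if `r i = t − 1` for some `i`, and `1` otherwise. -/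
noncomputable def deltafun (n : ℕ) (r : Fin n → ℤ) (t : ℤ) : ℝ :=
  if ∃ i : Fin n, r i = t - 1 then 0 else 1

/-- The middle sum `∑_{a ≤ t ≤ b, l(t−1) odd} δ(t) 2^{d(t)−3/2}
  + ∑_{a ≤ t ≤ b, l(t−1) even} δ(t) 2^{d(t)−1}`. -/
noncomputable def middleSum (n : ℕ) (r : Fin n → ℤ) (a b : ℤ) : ℝ :=
  (∑ t ∈ Finset.Icc a b, if Odd (lfun n r (t - 1)) then
      deltafun n r t * (2 : ℝ) ^ (dfun n r t - 3 / 2) else 0) +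
  (∑ t ∈ Finset.Icc a b, if Even (lfun n r (t - 1)) then
      deltafun n r t * (2 : ℝ) ^ (dfun n r t - 1) else 0)

open Finset

lemma sum_Icc_comp_sub {M : Type*} [AddCommMonoid M] (f : ℤ → M) (a b c : ℤ) :
    ∑ t ∈ Icc a b, f (t - c) = ∑ s ∈ Icc (a - c) (b - c), f s :=
  sum_nbij' (· - c) (· + c) (fun t ht => mem_Icc.2 (by have := mem_Icc.1 ht; omega))
    (fun s hs => mem_Icc.2 (by have := mem_Icc.1 hs; omega)) (fun t _ => sub_add_cancel t c)
    (fun s _ => add_sub_cancel_right s c) (fun t _ => rfl)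

def gapSum (n : ℕ) (r : Fin n → ℤ) (u : ℤ) : ℤ :=
  ∑ i, if r i < u then u - r i else 0

section

variable (n : ℕ) (r : Fin n → ℤ)

lemma dfun_eq_sub_gapSum (t : ℤ) : dfun n r t = t - (gapSum n r (t - 1) : ℝ) / 2 := by
  have hterm : ∀ i, (if r i < t - 1 then ((r i : ℝ) - t + 1) else 0) =
      -(((if r i < t - 1 then t - 1 - r i else 0 : ℤ)) : ℝ) := by
    intro i; split_ifs <;> push_cast <;> ring
  simp only [dfun, gapSum, hterm, sum_neg_distrib, Int.cast_sum]
  ring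

lemma even_lfun_add_gapSum (u : ℤ) : Even ((lfun n r u : ℤ) + gapSum n r u) := by
  have hl : (lfun n r u : ℤ) = ∑ i, if r i < u ∧ Odd (r i - u) then 1 else 0 := by
    rw [lfun, Set.ncard_eq_toFinset_card', Set.toFinset_ofPred, natCast_card_filter]
  rw [hl, gapSum, ← sum_add_distrib]
  refine even_sum _ fun i _ => ?_
  by_cases hlt : r i < u
  · by_cases hodd : Odd (r i - u)
    · simp only [hlt, hodd, and_self, if_true]
      rw [Int.odd_iff] at hodd; rw [Int.even_iff]; omega
    · simp only [hlt, hodd, and_false, if_false, if_true, zero_add]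
      rw [Int.not_odd_iff_even, Int.even_iff] at hodd; rw [Int.even_iff]; omega
  · simp [hlt]

lemma sum_sub_le_gapSum (s : Finset (Fin n)) (u : ℤ) : ∑ i ∈ s, (u - r i) ≤ gapSum n r u :=
  calc ∑ i ∈ s, (u - r i) ≤ ∑ i ∈ s, if r i < u then u - r i else 0 :=
        sum_le_sum fun i _ => by split_ifs <;> omega
    _ ≤ gapSum n r u := sum_le_univ_sum_of_nonneg fun i => by split_ifs <;> omega

lemma deltafun_mul_rpow_le (t : ℤ) {x y : ℝ} (h : x ≤ y) :
    deltafun n r t * (2 : ℝ) ^ x ≤ 2 ^ y := by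
  unfold deltafun
  split_ifs
  · rw [zero_mul]; positivity
  · rw [one_mul]; exact Real.rpow_le_rpow_of_exponent_le one_le_two h

lemma middleSum_summand_le (t k : ℤ) (hk : 2 * k ≤ gapSum n r (t - 1) + 1) :
    (if Odd (lfun n r (t - 1)) then deltafun n r t * (2 : ℝ) ^ (dfun n r t - 3 / 2) else 0) +
      (if Even (lfun n r (t - 1)) then deltafun n r t * (2 : ℝ) ^ (dfun n r t - 1) else 0) ≤
      2 ^ ((t - 1 - k : ℤ) : ℝ) := by
  have hpar := even_lfun_add_gapSum n r (t - 1)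
  rw [dfun_eq_sub_gapSum]
  rcases Nat.even_or_odd (lfun n r (t - 1)) with hl | hl
  · rw [if_neg (Nat.not_odd_iff_even.2 hl), if_pos hl, zero_add]
    obtain ⟨j, hj⟩ := (Int.even_add.1 hpar).1 hl.natCast
    have hkj : (k : ℝ) ≤ j := by exact_mod_cast (by omega : k ≤ j)
    refine deltafun_mul_rpow_le n r t ?_
    rw [hj]; push_cast; linarith
  · rw [if_pos hl, if_neg (Nat.not_even_iff_odd.2 hl), add_zero]
    obtain ⟨j, hj⟩ : Odd (gapSum n r (t - 1)) := by
      rw [← Int.not_even_iff_odd, ← (Int.even_add.1 hpar)]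
      exact Int.not_even_iff_odd.2 hl.natCast
    have hkj : (k : ℝ) ≤ j + 1 := by exact_mod_cast (by omega : k ≤ j + 1)
    refine deltafun_mul_rpow_le n r t ?_
    rw [hj]; push_cast; linarith

/-- The hypothesis says that the `t`-th summand is at most `2 ^ (c - t)`. -/
lemma middleSum_le_sum_Icc_rpow (a b c : ℤ)
    (h : ∀ t ∈ Icc a b, 4 * t - 3 - 2 * c ≤ gapSum n r (t - 1)) :
    middleSum n r a b ≤ ∑ s ∈ Icc (a - c) (b - c), (2 : ℝ) ^ (-(s : ℝ)) := by
  rw [middleSum, ← sum_add_distrib, ← sum_Icc_comp_sub (fun s : ℤ => (2 : ℝ) ^ (-(s : ℝ)))]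
  refine sum_le_sum fun t ht => ?_
  refine (middleSum_summand_le n r t (2 * t - 1 - c) (by linarith [h t ht])).trans_eq ?_
  congr 1; push_cast; ring

end

/-- Lemma 3.10 (Lemma `lemma5` of the paper): bound on the middle range of the local
density sum at p = 2 for the admissible quadruples (r₁,r₂,r₃,r₄). -/
theorem middle_sum_bound (n : ℕ) (hn : 6 ≤ n) (r : Fin n → ℤ)
    (hcases :
      (r ⟨0, by omega⟩ = 0 ∧ r ⟨1, by omega⟩ = 0 ∧ r ⟨2, by omega⟩ = 0 ∧
        0 ≤ r ⟨3, by omega⟩ ∧ r ⟨3, by omega⟩ ≤ 2) ∨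
      (r ⟨0, by omega⟩ = 0 ∧ r ⟨1, by omega⟩ = 0 ∧ r ⟨2, by omega⟩ = 1 ∧
        1 ≤ r ⟨3, by omega⟩ ∧ r ⟨3, by omega⟩ ≤ 3) ∨
      (r ⟨0, by omega⟩ = 0 ∧ r ⟨1, by omega⟩ = 1 ∧ r ⟨2, by omega⟩ = 1 ∧
        1 ≤ r ⟨3, by omega⟩ ∧ r ⟨3, by omega⟩ ≤ 2) ∨
      (r ⟨0, by omega⟩ = 0 ∧ r ⟨1, by omega⟩ = 1 ∧ r ⟨2, by omega⟩ = 2 ∧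
        2 ≤ r ⟨3, by omega⟩ ∧ r ⟨3, by omega⟩ ≤ 3)) :
    middleSum n r (r ⟨3, by omega⟩ + 2) (r ⟨n - 1, by omega⟩) ≤
      ∑ s ∈ Finset.Icc (1 : ℤ) (r ⟨n - 1, by omega⟩ - r ⟨3, by omega⟩ - 1),
        (2 : ℝ) ^ (-(s : ℝ)) ∧
    ((r ⟨0, by omega⟩ = 0 ∧ r ⟨1, by omega⟩ = 0 ∧ r ⟨2, by omega⟩ = 0 ∧ r ⟨3, by omega⟩ = 2) ∨
     (r ⟨0, by omega⟩ = 0 ∧ r ⟨1, by omega⟩ = 0 ∧ r ⟨2, by omega⟩ = 1 ∧ r ⟨3, by omega⟩ = 3) →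
      middleSum n r (r ⟨3, by omega⟩ + 2) (r ⟨n - 1, by omega⟩) ≤
        ∑ s ∈ Finset.Icc (2 : ℤ) (r ⟨n - 1, by omega⟩ - r ⟨3, by omega⟩),
          (2 : ℝ) ^ (-(s : ℝ))) := by
  have hfour (u : ℤ) : 4 * u - (r ⟨0, by omega⟩ + r ⟨1, by omega⟩ + r ⟨2, by omega⟩ +
      r ⟨3, by omega⟩) ≤ gapSum n r u := by
    have := sum_sub_le_gapSum n r (univ.map (Fin.castLEEmb (by omega : 4 ≤ n))) u
    rw [sum_map, Fin.sum_univ_four] at this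
    calc _ = u - r ⟨0, by omega⟩ + (u - r ⟨1, by omega⟩) + (u - r ⟨2, by omega⟩) +
          (u - r ⟨3, by omega⟩) := by ring
      _ ≤ gapSum n r u := this
  have key (c : ℤ) (hc : r ⟨0, by omega⟩ + r ⟨1, by omega⟩ + r ⟨2, by omega⟩ +
      r ⟨3, by omega⟩ ≤ 2 * c - 1) :=
    middleSum_le_sum_Icc_rpow n r (r ⟨3, by omega⟩ + 2) (r ⟨n - 1, by omega⟩) c
      fun t _ => by linarith [hfour (t - 1)]
  refine ⟨?_, fun hspecial => ?_⟩
  · convert key (r ⟨3, by omega⟩ + 1) (by omega) using 3 <;> ring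
  · convert key (r ⟨3, by omega⟩) (by omega) using 3; ring
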